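/- With A_h^{k,n} defined as in Lemma 5.1 (A_h^{k,n}=0 for h>k or h≤0, A_k^{k,n}=1, and A_h^{k,n} = −∑_{i=h+1}^k (−1)^{i−h} Θ(n,i,h) A_i^{k,n} where Θ(n,i,h) = N(n−2h,i−h), N(m,j)=(m/j)C(m−j−1,j−1) for j≥1, N(m,0)=1), and assuming 2k < n−1 (so n ≠ 2k, 2k+1), the identity A_h^{k,n} = A_h^{k,n−1} + A_h^{k−1,n−1} holds for all 1 ≤ h ≤ k. -/

import Mathlib

/-- `N(m,j) = (m/j) C(m-j-1,j-1)` for `j ≥ 1`, `N(m,0) = 1`. -/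
noncomputable def Ncount (m j : ℕ) : ℚ :=
  if j = 0 then 1 else ((m : ℚ) / (j : ℚ)) * (Nat.choose (m - j - 1) (j - 1) : ℚ)

/-- `Θ(n,k,h) = N(n-2h, k-h)`. -/
noncomputable def Theta (n k h : ℕ) : ℚ := Ncount (n - 2 * h) (k - h)

/-- The coefficients `A_h^{k,n}` of Lemma 5.1. -/
noncomputable def Acoeff (k n h : ℕ) : ℚ :=
  if h = 0 ∨ k < h then 0
  else if h = k then 1
  else -∑ i ∈ (Finset.Ioc h k).attach,
    (-1 : ℚ) ^ ((i : ℕ) - h) * Theta n (i : ℕ) h * Acoeff k n (i : ℕ)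
termination_by k - h
decreasing_by
  have hi := i.2
  rw [Finset.mem_Ioc] at hi
  omega

/-!
Write `f_n(h, i) = (-1)^(i-h) Θ(n,i,h)`. By definition of `A`, for `1 ≤ h ≤ k` the sum
`∑_{h ≤ i ≤ k} f_n(h, i) A_i^{k,n}` is `1` if `h = k` and `0` otherwise. The recurrence
`N(m+2, j+1) = N(m+1, j+1) + N(m, j)` gives `f_n(h, i) = f_{n-1}(h, i) - f_n(h+1, i)` for
`h < i ≤ k`. Inserting this into the relation for `A^{k,n}` at level `h`, and using the claim for
all `i > h` (induction on `k - h`), the relations for `A^{k,n-1}` and `A^{k-1,n-1}` at level `h`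
and for `A^{k,n}` at level `h + 1` leave exactly `A_h^{k,n} = A_h^{k,n-1} + A_h^{k-1,n-1}`.
-/

open Finset

theorem Ncount_add_two_add_one (m j : ℕ) (hjm : 2 * j < m) :
    Ncount (m + 2) (j + 1) = Ncount (m + 1) (j + 1) + Ncount m j := by
  rcases j with _ | t
  · simp [Ncount]
    ring
  · obtain ⟨b, rfl⟩ : ∃ b, m = b + 2 * t + 3 := ⟨m - (2 * t + 3), by omega⟩
    simp only [Ncount, if_neg (Nat.succ_ne_zero _), Nat.add_sub_cancel,
      show b + 2 * t + 3 + 2 - (t + 1 + 1) - 1 = b + t + 2 by omega,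
      show b + 2 * t + 3 + 1 - (t + 1 + 1) - 1 = b + t + 1 by omega,
      show b + 2 * t + 3 - (t + 1) - 1 = b + t + 1 by omega]
    have absorb : ((b + t + 1).choose (t + 1) * (t + 1) : ℚ) = (b + t + 1).choose t * (b + 1) := by
      exact_mod_cast (show b + 1 = b + t + 1 - t by omega) ▸ Nat.choose_succ_right_eq (b + t + 1) t
    rw [Nat.choose_succ_succ' (b + t + 1) t]
    push_cast
    field_simp
    linear_combination absorb

theorem Theta_self (n h : ℕ) : Theta n h h = 1 := by
  simp [Theta, Ncount]

theorem Theta_eq_add (n i h : ℕ) (hhi : h < i) (hin : 2 * i < n) :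
    Theta n i h = Theta (n - 1) i h + Theta n i (h + 1) := by
  have := Ncount_add_two_add_one (n - 2 * h - 2) (i - h - 1) (by omega)
  simp only [Theta]
  rwa [show n - 2 * h - 2 + 2 = n - 2 * h by omega, show i - h - 1 + 1 = i - h by omega,
    show n - 2 * h - 2 + 1 = n - 1 - 2 * h by omega, show n - 2 * h - 2 = n - 2 * (h + 1) by omega,
    show i - h - 1 = i - (h + 1) by omega] at this

theorem Acoeff_of_lt {k h : ℕ} (n : ℕ) (hkh : k < h) : Acoeff k n h = 0 := by
  rw [Acoeff, if_pos (Or.inr hkh)]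

theorem Acoeff_self (n : ℕ) {k : ℕ} (hk : 1 ≤ k) : Acoeff k n k = 1 := by
  rw [Acoeff, if_neg (by omega), if_pos rfl]

theorem Acoeff_eq_neg_sum (n : ℕ) {k h : ℕ} (hh : 1 ≤ h) (hhk : h < k) :
    Acoeff k n h = -∑ i ∈ Ioc h k, (-1 : ℚ) ^ (i - h) * Theta n i h * Acoeff k n i := by
  rw [Acoeff, if_neg (by omega), if_neg (by omega),
    sum_attach (Ioc h k) fun i ↦ (-1 : ℚ) ^ (i - h) * Theta n i h * Acoeff k n i]

theorem sum_Icc_Acoeff (n : ℕ) {k h K : ℕ} (hh : 1 ≤ h) (hkK : k ≤ K) :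
    ∑ i ∈ Icc h K, (-1 : ℚ) ^ (i - h) * Theta n i h * Acoeff k n i = if h = k then 1 else 0 := by
  rcases lt_or_ge k h with hkh | hhk
  · rw [if_neg hkh.ne']
    refine sum_eq_zero fun i hi ↦ ?_
    rw [Acoeff_of_lt n (hkh.trans_le (mem_Icc.1 hi).1), mul_zero]
  rw [← sum_subset (Icc_subset_Icc_right hkK) fun i hiK hik ↦ by
      rw [Acoeff_of_lt n (by simp only [mem_Icc] at hiK hik; omega), mul_zero],
    ← add_sum_Ioc_eq_sum_Icc hhk]
  simp only [Nat.sub_self, pow_zero, Theta_self, one_mul]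
  rcases hhk.eq_or_lt with rfl | hlt
  · simp [Acoeff_self n hh]
  · rw [Acoeff_eq_neg_sum n hh hlt, if_neg hlt.ne, neg_add_cancel]

theorem Acoeff_eq_add_of_forall_Ioc {k n h : ℕ} (hn : 2 * k + 1 < n) (hh : 1 ≤ h) (hhk : h ≤ k)
    (ih : ∀ i ∈ Ioc h k, Acoeff k n i = Acoeff k (n - 1) i + Acoeff (k - 1) (n - 1) i) :
    Acoeff k n h = Acoeff k (n - 1) h + Acoeff (k - 1) (n - 1) h := by
  have hA := sum_Icc_Acoeff n hh le_rfl (k := k)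
  have hB := sum_Icc_Acoeff (n - 1) hh le_rfl (k := k)
  have hC := sum_Icc_Acoeff (n - 1) hh (k.sub_le 1) (k := k - 1)
  have hD := sum_Icc_Acoeff n (Nat.le_succ_of_le hh) le_rfl (k := k) (h := h + 1)
  simp only [← add_sum_Ioc_eq_sum_Icc hhk, Nat.sub_self, pow_zero, Theta_self, one_mul] at hA hB hC
  rw [Icc_add_one_left_eq_Ioc] at hD
  simp only [show h + 1 = k ↔ h = k - 1 by omega] at hD
  have hsplit : ∑ i ∈ Ioc h k, (-1 : ℚ) ^ (i - h) * Theta n i h * Acoeff k n i =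
      ∑ i ∈ Ioc h k, (-1 : ℚ) ^ (i - h) * Theta (n - 1) i h * Acoeff k (n - 1) i +
      ∑ i ∈ Ioc h k, (-1 : ℚ) ^ (i - h) * Theta (n - 1) i h * Acoeff (k - 1) (n - 1) i -
      ∑ i ∈ Ioc h k, (-1 : ℚ) ^ (i - (h + 1)) * Theta n i (h + 1) * Acoeff k n i := by
    rw [← sum_add_distrib, ← sum_sub_distrib]
    refine sum_congr rfl fun i hi ↦ ?_
    obtain ⟨hhi, hik⟩ := mem_Ioc.1 hi
    have hsign : (-1 : ℚ) ^ (i - h) = -(-1) ^ (i - (h + 1)) := by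
      rw [show i - h = i - (h + 1) + 1 by omega, pow_succ, mul_neg_one]
    rw [Theta_eq_add n i h hhi (by omega), hsign]
    linear_combination -(-1 : ℚ) ^ (i - (h + 1)) * Theta (n - 1) i h * ih i hi
  split_ifs at hA hB hC hD <;> linarith

/-- Property (2) of Lemma 5.1: if `2k < n-1` then
`A_h^{k,n} = A_h^{k,n-1} + A_h^{k-1,n-1}` for all `1 ≤ h ≤ k`. -/
theorem stmt_17 (k n : ℕ) (hn : 2 * k < n - 1) :
    ∀ h, 1 ≤ h → h ≤ k → Acoeff k n h = Acoeff k (n - 1) h + Acoeff (k - 1) (n - 1) h := by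
  intro h hh hhk
  induction hd : k - h using Nat.strong_induction_on generalizing h with
  | _ d ih =>
    refine Acoeff_eq_add_of_forall_Ioc (by omega) hh hhk fun i hi ↦ ?_
    obtain ⟨hhi, hik⟩ := mem_Ioc.1 hi
    exact ih (k - i) (by omega) i (by omega) hik rfl
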